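/- In the bivariate log-linear setup, let p₁, p₁' ∈ Δ^{d₁−1}, set Δ := p₁' − p₁ and p₁^t := t·p₁' + (1−t)·p₁ for t ∈ [0,1]. Let r*(p₁') ∈ Δ^{d₂} be any point and q*(p₁') := Φ_{p₁'}(r*(p₁')). Then for every t ∈ [0,1], the gradient of F(r, p₁) in its second argument satisfies ‖∇_{p₁} F(r*(p₁'), p₁^t)‖ ≤ F̄(q*(p₁')) · ‖ exp(α_fix·‖Δ‖) ⊙ α_fix ‖, where exp acts componentwise on the vector α_fix·‖Δ‖ ∈ ℝ^n and ⊙ is the componentwise (Hadamard) product (Lemma bounding ‖∇_{p₁} F‖). -/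

import Mathlib

noncomputable section
open scoped RealInnerProductSpace BigOperators

/-- Euclidean space `ℝ^m`. -/
abbrev Euc (m : ℕ) := EuclideanSpace ℝ (Fin m)

/-- Build a vector of `ℝ^m` from its coordinates. -/
def vecOf {m : ℕ} (f : Fin m → ℝ) : Euc m := (WithLp.equiv 2 _).symm f

/-- The probability simplex in `ℝ^m`. -/
def probSimplex (m : ℕ) : Set (Euc m) := {p | (∀ i, 0 ≤ p i) ∧ ∑ i, p i = 1}

/-- A point of the collapsed space `ℝ^{1+d₂}` from `(ρ, b₂)`; coordinate `0` is `ρ`. -/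
def pairR {d₂ : ℕ} (ρ : ℝ) (b₂ : Fin d₂ → ℝ) : Euc (d₂ + 1) := vecOf (Fin.cons ρ b₂)

/-- The collapsed simplex `Δ^{d₂} = {(ρ, b₂) : ρ ≥ 0, b₂ ≥ 0, ρ + Σ_j (b₂)_j = 1}`. -/
def collapsedSimplex (d₂ : ℕ) : Set (Euc (d₂ + 1)) := probSimplex (d₂ + 1)

/-- A point of the full space `ℝ^{d₁+d₂}` from its two blocks of coordinates. -/
def pairQ {d₁ d₂ : ℕ} (x : Fin d₁ → ℝ) (y : Fin d₂ → ℝ) : Euc (d₁ + d₂) :=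
  vecOf (Fin.append x y)

/-- The expansion map `Φ_{p₁}(ρ, b₂) = (ρ·p₁, b₂)`. -/
def Phi {d₁ d₂ : ℕ} (p₁ : Euc d₁) (r : Euc (d₂ + 1)) : Euc (d₁ + d₂) :=
  pairQ (fun j => r 0 * p₁ j) (fun j => r j.succ)

variable {n d₁ d₂ : ℕ}

/-- `⟨A_i, q⟩` where `A_i = (A_{i,1}, A_{i,2})`. -/
def innerA (A₁ : Fin n → Euc d₁) (A₂ : Fin n → Euc d₂) (i : Fin n) (q : Euc (d₁ + d₂)) : ℝ :=
  ⟪pairQ (A₁ i) (A₂ i), q⟫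

/-- `F̄(q) = (1/n)·Σ_i exp(⟨A_i, q⟩)`. -/
def Fbar (A₁ : Fin n → Euc d₁) (A₂ : Fin n → Euc d₂) (q : Euc (d₁ + d₂)) : ℝ :=
  (1 / (n : ℝ)) * ∑ i, Real.exp (innerA A₁ A₂ i q)

/-- `F(q) = (1/n)·Σ_i (c_i + exp(⟨A_i, q⟩))`. -/
def Ffull (c : Fin n → ℝ) (A₁ : Fin n → Euc d₁) (A₂ : Fin n → Euc d₂)
    (q : Euc (d₁ + d₂)) : ℝ :=
  (1 / (n : ℝ)) * ∑ i, (c i + Real.exp (innerA A₁ A₂ i q))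

/-- The bivariate objective `F(r, p₁) := F(Φ_{p₁}(r))`. -/
def Fb (c : Fin n → ℝ) (A₁ : Fin n → Euc d₁) (A₂ : Fin n → Euc d₂)
    (r : Euc (d₂ + 1)) (p₁ : Euc d₁) : ℝ :=
  Ffull c A₁ A₂ (Phi p₁ r)

/-! With `ρ = r 0`, the objective is `p ↦ (1/n) Σᵢ (cᵢ + exp(ρ⟪A_{i,1}, p⟫ + βᵢ))`, whose gradient
is `(1/n) Σᵢ ρ exp(ρ⟪A_{i,1}, p⟫ + βᵢ) A_{i,1}`. Since `p₁^t - p₁' = (1 - t)(p₁ - p₁')` and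
`0 ≤ ρ(1 - t) ≤ 1`, Cauchy–Schwarz bounds each exponent at `p₁^t` by the one at `p₁'` plus
`‖A_{i,1}‖‖Δ‖`; together with `ρ ≤ 1` and the triangle inequality this gives the bound, each
`exp(‖A_{i,1}‖‖Δ‖)‖A_{i,1}‖` being at most the norm of the whole vector. -/

lemma innerA_Phi (A₁ : Fin n → Euc d₁) (A₂ : Fin n → Euc d₂) (i : Fin n)
    (p : Euc d₁) (r : Euc (d₂ + 1)) :
    innerA A₁ A₂ i (Phi p r) = r 0 * ⟪A₁ i, p⟫ + ∑ j, A₂ i j * r j.succ := by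
  simp [innerA, Phi, pairQ, vecOf, PiLp.inner_apply, Fin.sum_univ_add, Finset.mul_sum, mul_comm,
    mul_left_comm, mul_assoc]

lemma mem_Icc_of_mem_probSimplex {m : ℕ} {p : Euc m} (hp : p ∈ probSimplex m) (i : Fin m) :
    p i ∈ Set.Icc (0 : ℝ) 1 :=
  ⟨hp.1 i, hp.2 ▸ Finset.single_le_sum (fun j _ => hp.1 j) (Finset.mem_univ i)⟩

lemma le_norm_vecOf {m : ℕ} (f : Fin m → ℝ) (i : Fin m) : f i ≤ ‖vecOf f‖ :=
  (le_abs_self _).trans (PiLp.norm_apply_le (vecOf f) i)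

section ExpInner

variable {ι E : Type*} [Fintype ι] [NormedAddCommGroup E] [InnerProductSpace ℝ E]

lemma hasGradientAt_mul_sum_exp_inner [CompleteSpace E] (w ρ : ℝ) (c β : ι → ℝ) (a : ι → E)
    (x : E) :
    HasGradientAt (fun q => w * ∑ i, (c i + Real.exp (ρ * ⟪a i, q⟫ + β i)))
      (w • ∑ i, (Real.exp (ρ * ⟪a i, x⟫ + β i) * ρ) • a i) x := by
  rw [hasGradientAt_iff_hasFDerivAt]
  have h := (HasFDerivAt.fun_sum fun i (_ : i ∈ Finset.univ) =>
    ((((innerSL ℝ (a i)).hasFDerivAt (x := x)).const_mul ρ).add_const (β i)).exp.const_add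
      (c i)).const_mul w
  refine h.congr_fderiv (ContinuousLinearMap.ext fun v => ?_)
  simp [Finset.mul_sum, mul_assoc]

lemma mul_inner_lineMap_le {ρ t : ℝ} (hρ : ρ ∈ Set.Icc (0 : ℝ) 1) (ht : t ∈ Set.Icc (0 : ℝ) 1)
    (a p p' : E) :
    ρ * ⟪a, t • p' + (1 - t) • p⟫ ≤ ρ * ⟪a, p'⟫ + ‖a‖ * ‖p' - p‖ := by
  obtain ⟨hρ0, hρ1⟩ := hρ
  obtain ⟨ht0, ht1⟩ := ht
  have hp : t • p' + (1 - t) • p = p' - (1 - t) • (p' - p) := by module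
  have hcs : -(‖a‖ * ‖p' - p‖) ≤ ⟪a, p' - p⟫ :=
    (neg_le_neg (abs_real_inner_le_norm a (p' - p))).trans (neg_abs_le _)
  rw [hp, inner_sub_right, real_inner_smul_right]
  have hs0 : 0 ≤ ρ * (1 - t) := mul_nonneg hρ0 (by linarith)
  have hs1 : ρ * (1 - t) ≤ 1 := by nlinarith
  nlinarith [mul_nonneg hs0 (neg_le_iff_add_nonneg.1 hcs),
    mul_nonneg (sub_nonneg.2 hs1) (mul_nonneg (norm_nonneg a) (norm_nonneg (p' - p)))]

lemma norm_smul_sum_exp_smul_le {w ρ δ B : ℝ} (hw : 0 ≤ w) (hρ : ρ ∈ Set.Icc (0 : ℝ) 1)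
    (a : ι → E) (β : ι → ℝ) {x y : E} (hxy : ∀ i, ρ * ⟪a i, x⟫ ≤ ρ * ⟪a i, y⟫ + ‖a i‖ * δ)
    (hB : ∀ i, Real.exp (‖a i‖ * δ) * ‖a i‖ ≤ B) :
    ‖w • ∑ i, (Real.exp (ρ * ⟪a i, x⟫ + β i) * ρ) • a i‖ ≤
      w * ∑ i, Real.exp (ρ * ⟪a i, y⟫ + β i) * B := by
  have hterm (i : ι) :
      ‖(Real.exp (ρ * ⟪a i, x⟫ + β i) * ρ) • a i‖ ≤ Real.exp (ρ * ⟪a i, y⟫ + β i) * B := by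
    have hexp : Real.exp (ρ * ⟪a i, x⟫ + β i) ≤
        Real.exp (ρ * ⟪a i, y⟫ + β i) * Real.exp (‖a i‖ * δ) := by
      rw [← Real.exp_add]
      exact Real.exp_le_exp.2 (by linarith [hxy i])
    calc ‖(Real.exp (ρ * ⟪a i, x⟫ + β i) * ρ) • a i‖
        = Real.exp (ρ * ⟪a i, x⟫ + β i) * ρ * ‖a i‖ := by
          rw [norm_smul, Real.norm_of_nonneg (by positivity [hρ.1])]
      _ ≤ Real.exp (ρ * ⟪a i, x⟫ + β i) * 1 * ‖a i‖ := by gcongr; exact hρ.2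
      _ ≤ Real.exp (ρ * ⟪a i, y⟫ + β i) * (Real.exp (‖a i‖ * δ) * ‖a i‖) := by
          rw [mul_one, ← mul_assoc]; gcongr
      _ ≤ Real.exp (ρ * ⟪a i, y⟫ + β i) * B := by gcongr; exact hB i
  rw [norm_smul, Real.norm_of_nonneg hw]
  gcongr
  exact (norm_sum_le _ _).trans (Finset.sum_le_sum fun i _ => hterm i)

end ExpInner

theorem grad_p1_bound_general
    {n d₁ d₂ : ℕ} (c : Fin n → ℝ) (A₁ : Fin n → Euc d₁) (A₂ : Fin n → Euc d₂)
    {p₁ p₁' : Euc d₁} {rstar' : Euc (d₂ + 1)} (hr : rstar' ∈ collapsedSimplex d₂) :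
    ∀ t ∈ Set.Icc (0 : ℝ) 1,
      ‖gradient (fun p => Fb c A₁ A₂ rstar' p) (t • p₁' + (1 - t) • p₁)‖ ≤
        Fbar A₁ A₂ (Phi p₁' rstar') *
          ‖vecOf (fun i => Real.exp (‖A₁ i‖ * ‖p₁' - p₁‖) * ‖A₁ i‖)‖ := by
  intro t ht
  have hρ := mem_Icc_of_mem_probSimplex hr 0
  set β : Fin n → ℝ := fun i => ∑ j, A₂ i j * rstar' j.succ
  have hF : (fun p => Fb c A₁ A₂ rstar' p) =
      fun q => (1 / (n : ℝ)) * ∑ i, (c i + Real.exp (rstar' 0 * ⟪A₁ i, q⟫ + β i)) := by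
    funext q
    simp only [Fb, Ffull, innerA_Phi, β]
  have hFbar : Fbar A₁ A₂ (Phi p₁' rstar') =
      (1 / (n : ℝ)) * ∑ i, Real.exp (rstar' 0 * ⟪A₁ i, p₁'⟫ + β i) := by
    simp only [Fbar, innerA_Phi, β]
  rw [hF, (hasGradientAt_mul_sum_exp_inner _ _ c β A₁ _).gradient, hFbar, mul_assoc,
    Finset.sum_mul]
  exact norm_smul_sum_exp_smul_le (by positivity) hρ A₁ β
    (fun i => mul_inner_lineMap_le hρ ht _ _ _)
    (le_norm_vecOf (fun i => Real.exp (‖A₁ i‖ * ‖p₁' - p₁‖) * ‖A₁ i‖))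

/-- **Lemma (bound on `‖∇_{p₁} F‖` in the bivariate log-linear setup).**
For `p₁, p₁' ∈ Δ^{d₁−1}`, `Δ = p₁' − p₁`, `p₁^t = t·p₁' + (1−t)·p₁`, any `r*(p₁') ∈ Δ^{d₂}`
and `q*(p₁') = Φ_{p₁'}(r*(p₁'))`, for every `t ∈ [0,1]`,
`‖∇_{p₁} F(r*(p₁'), p₁^t)‖ ≤ F̄(q*(p₁')) · ‖ exp(α_fix·‖Δ‖) ⊙ α_fix ‖`. -/
theorem grad_p1_bound
    {n d₁ d₂ : ℕ} (hn : 0 < n) (hd₁ : 0 < d₁)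
    (c : Fin n → ℝ) (hc : ∀ i, 0 < c i)
    (A₁ : Fin n → Euc d₁) (A₂ : Fin n → Euc d₂)
    {p₁ p₁' : Euc d₁} (hp₁ : p₁ ∈ probSimplex d₁) (hp₁' : p₁' ∈ probSimplex d₁)
    {rstar' : Euc (d₂ + 1)} (hr : rstar' ∈ collapsedSimplex d₂) :
    ∀ t ∈ Set.Icc (0 : ℝ) 1,
      ‖gradient (fun p => Fb c A₁ A₂ rstar' p) (t • p₁' + (1 - t) • p₁)‖ ≤
        Fbar A₁ A₂ (Phi p₁' rstar') *
          ‖vecOf (fun i => Real.exp (‖A₁ i‖ * ‖p₁' - p₁‖) * ‖A₁ i‖)‖ :=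
  grad_p1_bound_general c A₁ A₂ hr
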